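/- arXiv:1908.07854 — 5 statements merged into one kernel-verified Lean document; each statement's English description precedes it below -/
import Mathlib

section
/- Let n ≥ 4 be an even integer and Λ = Cay(D_{2n}, Ψ) with Ψ = {b, ab, ..., a^{n-1}b} ∪ {a^{n/2}}. The adjacency matrix of Λ has eigenvalues n+1 and 1−n each with multiplicity 1, eigenvalue 1 with multiplicity n−2, and eigenvalue −1 with multiplicity n. -/
/-!
Order the vertices as `r i` followed by `sr i`. Since `Ψ` is inverse-closed and avoids `1`, the
adjacency matrix becomes `[[P, J], [J, P]]`, where `J` is the all-ones matrix and `P` the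
permutation matrix of `i ↦ i + n/2` on `ZMod n`. A block circulant matrix `[[A, B], [B, A]]` is
similar to `[[A + B, 0], [B, A - B]]`, so its characteristic polynomial is `χ(A + B) χ(A - B)`;
hence `χ = χ(P + J) χ(P - J)`. Splitting `ZMod n` into the two halves exchanged by `i ↦ i + n/2`
makes `P + tJ` block circulant again, with blocks `tJ` and `1 + tJ`, so
`χ(P + tJ) = χ(1 + 2tJ) χ(-1)`. Finally the `m × m` matrix `a + bJ` has eigenvalue `a` with
multiplicity `m - 1` and eigenvalue `a + mb`.
-/

/-- The Cayley graph of a group with connection set `S`. -/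
def cayley {G : Type*} [Group G] (S : Set G) : SimpleGraph G :=
  SimpleGraph.fromRel (fun x y => x⁻¹ * y ∈ S)

/-- The connection set `Ψ = {b, ab, …, a^{n-1}b} ∪ {a^{n/2}}` in the dihedral group. -/
def Psi (n : ℕ) : Set (DihedralGroup n) :=
  {x | ∃ i : ZMod n, x = DihedralGroup.sr i} ∪ {DihedralGroup.r ((n / 2 : ℕ) : ZMod n)}

open Matrix Polynomial

namespace Matrix

variable {R : Type*} [CommRing R] {n : Type*} [Fintype n] [DecidableEq n]

theorem charpoly_fromBlocks_circulant (A B : Matrix n n R) :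
    (fromBlocks A B B A).charpoly = (A + B).charpoly * (A - B).charpoly := by
  let T : Matrix (n ⊕ n) (n ⊕ n) R := fromBlocks 1 1 0 1
  let T' : Matrix (n ⊕ n) (n ⊕ n) R := fromBlocks 1 (-1) 0 1
  have hT : T' * T = 1 := by simp [T, T', fromBlocks_multiply]
  have hconj : T * fromBlocks A B B A * T' = fromBlocks (A + B) 0 B (A - B) := by
    simp only [T, T', fromBlocks_multiply]
    congr 1 <;> simp <;> abel
  calc (fromBlocks A B B A).charpoly = (T' * (T * fromBlocks A B B A)).charpoly := by
        rw [← Matrix.mul_assoc, hT, Matrix.one_mul]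
    _ = (T * fromBlocks A B B A * T').charpoly := charpoly_mul_comm _ _
    _ = (A + B).charpoly * (A - B).charpoly := by rw [hconj, charpoly_fromBlocks_zero₁₂]

theorem charpoly_smul_one_add_smul_ones [Nonempty n] (a b : R) :
    (a • (1 : Matrix n n R) + b • of fun _ _ => 1).charpoly =
      (X - C a) ^ (Fintype.card n - 1) * (X - C (a + Fintype.card n * b)) := by
  have hrankOne : a • (1 : Matrix n n R) + b • of (fun _ _ => 1) =
      vecMulVec (fun _ => b) (fun _ => 1) - scalar n (-a) := by
    ext i j
    by_cases hij : i = j <;> simp [vecMulVec, hij, add_comm]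
  obtain ⟨k, hk⟩ : ∃ k, Fintype.card n = k + 1 := Nat.exists_eq_add_one.mpr Fintype.card_pos
  rw [hrankOne, charpoly_sub_scalar, charpoly_vecMulVec, hk]
  simp [dotProduct, hk, pow_succ, smul_eq_C_mul]
  ring

end Matrix

theorem cayley_adj_iff {G : Type*} [Group G] {S : Set G} (hS : ∀ g, g⁻¹ ∈ S ↔ g ∈ S)
    (h1 : (1 : G) ∉ S) (x y : G) : (cayley S).Adj x y ↔ x⁻¹ * y ∈ S := by
  have hsymm : y⁻¹ * x ∈ S ↔ x⁻¹ * y ∈ S := by rw [← hS, _root_.mul_inv_rev, inv_inv]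
  rw [cayley, SimpleGraph.fromRel_adj, hsymm, or_self, and_iff_right_iff_imp]
  rintro h rfl
  exact h1 (by simpa using h)

namespace ZMod

variable {n : ℕ}

theorem natCast_half_add_self (hn : Even n) : ((n / 2 : ℕ) : ZMod n) + (n / 2 : ℕ) = 0 := by
  rw [← Nat.cast_add, ← two_mul, Nat.mul_div_cancel' hn.two_dvd, ZMod.natCast_self]

theorem natCast_half_ne_zero [NeZero n] (hn : Even n) : ((n / 2 : ℕ) : ZMod n) ≠ 0 := by
  obtain ⟨m, rfl⟩ := hn
  have hm : 0 < m := Nat.pos_of_ne_zero fun h => NeZero.ne (m + m) (by omega)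
  rw [show (m + m) / 2 = m by omega, Ne, ZMod.natCast_eq_zero_iff]
  exact fun h => absurd (Nat.le_of_dvd hm h) (by omega)

end ZMod

noncomputable def finSumFinEquivZMod (m : ℕ) [NeZero m] : Fin m ⊕ Fin m ≃ ZMod (m + m) :=
  Equiv.ofBijective (fun x => ((finSumFinEquiv x : ℕ) : ZMod (m + m))) <| by
    rw [Fintype.bijective_iff_injective_and_card, ZMod.card, Fintype.card_sum, Fintype.card_fin]
    refine ⟨fun x y h => ?_, rfl⟩
    rw [ZMod.natCast_eq_natCast_iff', Nat.mod_eq_of_lt (Fin.is_lt _),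
      Nat.mod_eq_of_lt (Fin.is_lt _)] at h
    exact finSumFinEquiv.injective (Fin.ext h)

theorem finSumFinEquivZMod_swap (m : ℕ) [NeZero m] (x : Fin m ⊕ Fin m) :
    finSumFinEquivZMod m x.swap = finSumFinEquivZMod m x + m := by
  rcases x with a | a
  · simp [finSumFinEquivZMod, add_comm]
  · simp only [finSumFinEquivZMod, Equiv.ofBijective_apply, Sum.swap_inr,
      finSumFinEquiv_apply_left, finSumFinEquiv_apply_right, Fin.val_castAdd, Fin.val_natAdd,
      Nat.cast_add]
    rw [add_comm (m : ZMod (m + m)), add_assoc, ← Nat.cast_add, ZMod.natCast_self, add_zero]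

theorem charpoly_permMatrix_addRight_add_smul_ones {R : Type*} [CommRing R] (m : ℕ) [NeZero m]
    (t : R) :
    ((Equiv.addRight (m : ZMod (m + m))).permMatrix R + t • of fun _ _ => 1).charpoly =
      (X - 1) ^ (m - 1) * (X - C (1 + 2 * m * t)) * (X + 1) ^ m := by
  let J : Matrix (Fin m) (Fin m) R := of fun _ _ => 1
  have hblocks : reindex (finSumFinEquivZMod m).symm (finSumFinEquivZMod m).symm
      ((Equiv.addRight (m : ZMod (m + m))).permMatrix R + t • of fun _ _ => 1) =
      fromBlocks (t • J) (1 + t • J) (1 + t • J) (t • J) := by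
    ext (i | i) (j | j) <;>
      simp [J, PEquiv.toMatrix_apply, ← finSumFinEquivZMod_swap, Matrix.one_apply]
  have hsum : t • J + (1 + t • J) = (1 : R) • (1 : Matrix (Fin m) (Fin m) R) + (2 * t) • J := by
    module
  have hdiff : t • J - (1 + t • J) = (-1 : R) • (1 : Matrix (Fin m) (Fin m) R) + (0 : R) • J := by
    module
  rw [← charpoly_reindex (finSumFinEquivZMod m).symm, hblocks, charpoly_fromBlocks_circulant, hsum,
    hdiff, charpoly_smul_one_add_smul_ones, charpoly_smul_one_add_smul_ones, Fintype.card_fin]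
  obtain ⟨k, rfl⟩ := Nat.exists_eq_add_one.mpr (Nat.pos_of_neZero m)
  simp [pow_succ]
  ring

namespace DihedralGroup

variable {n : ℕ}

theorem r_mem_Psi {i : ZMod n} : r i ∈ Psi n ↔ i = (n / 2 : ℕ) := by
  simp [Psi]

theorem sr_mem_Psi (i : ZMod n) : sr i ∈ Psi n := Or.inl ⟨i, rfl⟩

theorem inv_mem_Psi (hn : Even n) (g : DihedralGroup n) : g⁻¹ ∈ Psi n ↔ g ∈ Psi n := by
  cases g with
  | r i =>
    rw [inv_r, r_mem_Psi, r_mem_Psi, neg_eq_iff_eq_neg,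
      ← eq_neg_of_add_eq_zero_left (ZMod.natCast_half_add_self hn)]
  | sr i => simp [sr_mem_Psi]

theorem one_notMem_Psi [NeZero n] (hn : Even n) : (1 : DihedralGroup n) ∉ Psi n := by
  rw [one_def, r_mem_Psi]
  exact (ZMod.natCast_half_ne_zero hn).symm

theorem reindex_adjMatrix_cayley_Psi [NeZero n] (hn : Even n) {R : Type*} [Zero R] [One R]
    [DecidableRel (cayley (Psi n)).Adj] :
    reindex equivSum equivSum ((cayley (Psi n)).adjMatrix R) =
      fromBlocks ((Equiv.addRight ((n / 2 : ℕ) : ZMod n)).permMatrix R) (of fun _ _ => 1)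
        (of fun _ _ => 1) ((Equiv.addRight ((n / 2 : ℕ) : ZMod n)).permMatrix R) := by
  have hadj := cayley_adj_iff (inv_mem_Psi hn) (one_notMem_Psi hn)
  ext (i | i) (j | j) <;>
    simp [SimpleGraph.adjMatrix, hadj, r_mem_Psi, sr_mem_Psi, PEquiv.toMatrix_apply,
      neg_add_eq_sub, sub_eq_iff_eq_add', eq_comm (a := j)]

end DihedralGroup

open scoped Classical in
theorem cayley_adjMatrix_charpoly_general (n : ℕ) (hev : Even n) [NeZero n] :
    (Matrix.of fun u v : DihedralGroup n =>
        if (cayley (Psi n)).Adj u v then (1 : ℝ) else 0).charpoly =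
      (Polynomial.X - Polynomial.C ((n : ℝ) + 1)) *
        (Polynomial.X - Polynomial.C (1 - (n : ℝ))) *
        (Polynomial.X - 1) ^ (n - 2) * (Polynomial.X + 1) ^ n := by
  have hblocks := DihedralGroup.reindex_adjMatrix_cayley_Psi (R := ℝ) hev
  obtain ⟨m, rfl⟩ := hev
  have : NeZero m := ⟨fun h => NeZero.ne (m + m) (by omega)⟩
  rw [show (m + m) / 2 = m by omega] at hblocks
  set P := (Equiv.addRight (m : ZMod (m + m))).permMatrix ℝ
  have hplus : P + (of fun _ _ => 1) = P + (1 : ℝ) • of fun _ _ => 1 := by rw [one_smul]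
  have hminus : P - (of fun _ _ => 1) = P + (-1 : ℝ) • of fun _ _ => 1 := by
    rw [neg_one_smul, sub_eq_add_neg]
  change ((cayley (Psi (m + m))).adjMatrix ℝ).charpoly = _
  rw [← charpoly_reindex DihedralGroup.equivSum, hblocks, charpoly_fromBlocks_circulant, hminus,
    hplus, charpoly_permMatrix_addRight_add_smul_ones, charpoly_permMatrix_addRight_add_smul_ones]
  obtain ⟨k, rfl⟩ := Nat.exists_eq_add_one.mpr (Nat.pos_of_neZero m)
  rw [show k + 1 + (k + 1) - 2 = k + k by omega]
  simp only [map_add, map_sub, map_mul, map_neg, map_one, map_natCast, map_ofNat]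
  push_cast
  ring

open scoped Classical in
theorem cayley_adjMatrix_charpoly (n : ℕ) (hn : 4 ≤ n) (hev : Even n) [NeZero n] :
    (Matrix.of fun u v : DihedralGroup n =>
        if (cayley (Psi n)).Adj u v then (1 : ℝ) else 0).charpoly =
      (Polynomial.X - Polynomial.C ((n : ℝ) + 1)) *
        (Polynomial.X - Polynomial.C (1 - (n : ℝ))) *
        (Polynomial.X - 1) ^ (n - 2) * (Polynomial.X + 1) ^ n :=
  cayley_adjMatrix_charpoly_general n hev
end

section
/- Let n ≥ 4 be an even integer and Λ = Cay(D_{2n}, Ψ) with Ψ = {b, ab, ..., a^{n-1}b} ∪ {a^{n/2}}. Then Λ is not a distance regular graph. -/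
/-- A graph is distance regular if there are intersection numbers `b r`, `c r` such that
for every pair of vertices at distance `r`, the number of neighbors of `u` at distance
`r+1` (resp. `r-1`) from `v` is `b r` (resp. `c r`). -/
def IsDistanceRegular {V : Type*} (G : SimpleGraph V) : Prop :=
  ∃ b c : ℕ → ℕ, ∀ (u v : V) (r : ℕ), G.dist u v = r →
    ((G.neighborSet u ∩ {w | G.dist v w = r + 1}).ncard = b r ∧
     (G.neighborSet u ∩ {w | G.dist v w = r - 1}).ncard = c r)

/-!
Write `ρ = a^{n/2}`. For `n` even, `Ψ` is closed under inversion, and `ρ⁻¹ · a^i b` is again a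
reflection, so `ρ` is adjacent to every other neighbour of `1`: along the edge `{1, ρ}` no
neighbour of `1` is at distance `2` from `ρ`, i.e. `b₁ = 0`. Along the edge `{1, b}`, however,
the neighbour `ab` of `1` is at distance `2` from `b`, since `b · ab = a⁻¹ ∉ Ψ` once `n ≥ 4`.
-/

open DihedralGroup SimpleGraph

theorem not_isDistanceRegular_of_adj_of_not_adj {V : Type*} {G : SimpleGraph V}
    [G.LocallyFinite] {u v x y : V} (huv : G.Adj u v)
    (hdom : ∀ w, G.Adj u w → w = v ∨ G.Adj v w)
    (hux : G.Adj u x) (huy : G.Adj u y) (hxy : x ≠ y) (hnxy : ¬ G.Adj x y) :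
    ¬ IsDistanceRegular G := by
  rintro ⟨b, c, h⟩
  have hb_zero : b 1 = 0 := by
    rw [← (h u v 1 (dist_eq_one_iff_adj.2 huv)).1, Set.ncard_eq_zero]
    refine Set.eq_empty_of_forall_notMem fun w ⟨huw, hvw⟩ => ?_
    rcases hdom w huw with rfl | hvw'
    · simp at hvw
    · simp [dist_eq_one_iff_adj.2 hvw'] at hvw
  have hxy_dist : G.dist x y = 2 := by
    have : G.edist x y = 2 := edist_eq_two_iff.2 ⟨hxy, hnxy, u, hux.symm, huy.symm⟩
    rw [SimpleGraph.dist, this]; rfl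
  have hb_pos : 0 < b 1 := by
    rw [← (h u x 1 (dist_eq_one_iff_adj.2 hux)).1]
    exact (Set.ncard_pos ((G.neighborSet u).toFinite.subset Set.inter_subset_left)).2
      ⟨y, huy, hxy_dist⟩
  omega

theorem cayley_adj_iff_of_inv_mem_iff {G : Type*} [Group G] {S : Set G}
    (hS : ∀ g, g⁻¹ ∈ S ↔ g ∈ S) {x y : G} :
    (cayley S).Adj x y ↔ x ≠ y ∧ x⁻¹ * y ∈ S := by
  rw [cayley, fromRel_adj, ← hS (y⁻¹ * x), mul_inv_rev, inv_inv, or_self]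

namespace Psi

variable {n : ℕ}

theorem sr_mem (i : ZMod n) : sr i ∈ Psi n := Or.inl ⟨i, rfl⟩

theorem r_mem_iff {j : ZMod n} : r j ∈ Psi n ↔ j = ((n / 2 : ℕ) : ZMod n) := by
  simp [Psi]

theorem inv_mem_iff (hev : Even n) (g : DihedralGroup n) : g⁻¹ ∈ Psi n ↔ g ∈ Psi n := by
  obtain ⟨k, rfl⟩ := hev
  have hneg : -((k + k) / 2 : ℕ) = (((k + k) / 2 : ℕ) : ZMod (k + k)) := by
    rw [neg_eq_iff_add_eq_zero, ← Nat.cast_add, ZMod.natCast_eq_zero_iff]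
    exact ⟨1, by omega⟩
  cases g with
  | r j => rw [inv_r, r_mem_iff, r_mem_iff, neg_eq_iff_eq_neg, hneg]
  | sr i => rw [inv_sr]

theorem cayley_adj_iff (hev : Even n) {x y : DihedralGroup n} :
    (cayley (Psi n)).Adj x y ↔ x ≠ y ∧ x⁻¹ * y ∈ Psi n :=
  cayley_adj_iff_of_inv_mem_iff (inv_mem_iff hev)

end Psi

theorem ZMod.natCast_half_ne_zero_s5 {n : ℕ} (hn : 2 ≤ n) : ((n / 2 : ℕ) : ZMod n) ≠ 0 := by
  rw [Ne, ZMod.natCast_eq_zero_iff]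
  exact fun h => absurd (Nat.le_of_dvd (by omega) h) (by omega)

theorem ZMod.natCast_half_ne_one {n : ℕ} (hn : 4 ≤ n) : ((n / 2 : ℕ) : ZMod n) ≠ 1 := by
  rw [Ne, ← Nat.cast_one, ZMod.natCast_eq_natCast_iff', Nat.mod_eq_of_lt (by omega),
    Nat.mod_eq_of_lt (by omega)]
  omega

theorem cayley_not_distance_regular (n : ℕ) (hn : 4 ≤ n) (hev : Even n) :
    ¬ IsDistanceRegular (cayley (Psi n)) := by
  have : NeZero n := ⟨by omega⟩
  have : Fact (1 < n) := ⟨by omega⟩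
  classical
  have hadj := @Psi.cayley_adj_iff n hev
  refine not_isDistanceRegular_of_adj_of_not_adj
    (u := 1) (v := r ((n / 2 : ℕ) : ZMod n)) (x := sr 0) (y := sr 1) ?_ ?_ ?_ ?_ (by simp) ?_
  · simp [hadj, ← r_zero, Psi.r_mem_iff, (ZMod.natCast_half_ne_zero_s5 (n := n) (by omega)).symm]
  · intro w hw
    rw [hadj, inv_one, one_mul] at hw
    rcases hw.2 with ⟨i, rfl⟩ | rfl
    · simp [hadj, inv_r, Psi.sr_mem]
    · exact Or.inl rfl
  · simp [hadj, ← r_zero, Psi.sr_mem]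
  · simp [hadj, ← r_zero, Psi.sr_mem]
  · simp [hadj, inv_sr, sr_mul_sr, Psi.r_mem_iff, (ZMod.natCast_half_ne_one hn).symm]
end

section
/- Let n ≥ 4 be an even integer and Λ = Cay(D_{2n}, Ψ) with Ψ = {b, ab, ..., a^{n-1}b} ∪ {a^{n/2}}. The set R = {a, a^2, ..., a^{n/2}} ∪ {ab, a^2b, ..., a^{n/2}b} is not a strong resolving set of Λ. -/
/-- `w` strongly resolves `u` and `v`: one of them lies on a shortest path
between the other and `w`. -/
def StronglyResolves {V : Type*} (G : SimpleGraph V) (w u v : V) : Prop :=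
  G.dist u w = G.dist u v + G.dist v w ∨ G.dist v w = G.dist v u + G.dist u w

/-- `S` is a strong resolving set of `G`. -/
def IsStrongResolvingSet {V : Type*} (G : SimpleGraph V) (S : Set V) : Prop :=
  ∀ u v : V, u ≠ v → ∃ w ∈ S, StronglyResolves G w u v

/-!
Every reflection is adjacent to every rotation, so the Cayley graph has diameter at most two.
In a graph of diameter two a vertex `w` strongly resolving two vertices `u, v` at distance two
would need `d(u, w) = 2 + d(v, w)`, forcing `w = u` or `w = v`. The rotations `1` and `a^{-1}`
are at distance two (their quotient `a` is not `a^{n/2}`) and neither lies in `R`.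
-/

open DihedralGroup SimpleGraph

theorem not_stronglyResolves_of_dist_le_two {V : Type*} {G : SimpleGraph V}
    (hconn : G.Connected) (hdist : ∀ x y, G.dist x y ≤ 2) {u v w : V} (huv : u ≠ v)
    (hadj : ¬ G.Adj u v) (hwu : w ≠ u) (hwv : w ≠ v) : ¬ StronglyResolves G w u v := by
  have hne_one : G.dist u v ≠ 1 := mt dist_eq_one_iff_adj.mp hadj
  have huv_pos := hconn.pos_dist_of_ne huv
  have huw_pos := hconn.pos_dist_of_ne hwu.symm
  have hvw_pos := hconn.pos_dist_of_ne hwv.symm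
  have := hdist u v
  have := hdist u w
  have := hdist v w
  rw [StronglyResolves, dist_comm (u := v) (v := u)]
  omega

theorem ZMod.natCast_ne_natCast_of_lt {n a b : ℕ} (ha : a < n) (hb : b < n) (hab : a ≠ b) :
    (a : ZMod n) ≠ b := by
  rwa [Ne, ZMod.natCast_eq_natCast_iff', Nat.mod_eq_of_lt ha, Nat.mod_eq_of_lt hb]

theorem ZMod.natCast_ne_neg_one {n a : ℕ} (h : a + 1 < n) : (a : ZMod n) ≠ -1 := by
  intro ha
  have : ((a + 1 : ℕ) : ZMod n) = 0 := by rw [Nat.cast_succ, ha, neg_add_cancel]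
  rw [ZMod.natCast_eq_zero_iff] at this
  exact Nat.not_dvd_of_pos_of_lt a.succ_pos h this

section CayleyPsi

variable {n : ℕ}

theorem cayley_psi_adj_r_sr (i j : ZMod n) : (cayley (Psi n)).Adj (r i) (sr j) := by
  rw [cayley, fromRel_adj]
  exact ⟨by simp, .inl (.inl ⟨j + i, by rw [inv_r, r_mul_sr, sub_neg_eq_add]⟩)⟩

theorem cayley_psi_adj_r_r_iff (i j : ZMod n) :
    (cayley (Psi n)).Adj (r i) (r j) ↔ i ≠ j ∧ (j - i = (n / 2 : ℕ) ∨ i - j = (n / 2 : ℕ)) := by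
  simp [cayley, Psi, inv_r, r_mul_r, neg_add_eq_sub]

theorem cayley_psi_not_adj_r_zero_r_neg_one (hn : 4 ≤ n) :
    ¬ (cayley (Psi n)).Adj (r 0) (r (-1)) := by
  have hne_neg_one : ((n / 2 : ℕ) : ZMod n) ≠ -1 := ZMod.natCast_ne_neg_one (by omega)
  have hne_one : ((n / 2 : ℕ) : ZMod n) ≠ ((1 : ℕ) : ZMod n) :=
    ZMod.natCast_ne_natCast_of_lt (by omega) (by omega) (by omega)
  rw [Nat.cast_one] at hne_one
  rw [cayley_psi_adj_r_r_iff, sub_zero, zero_sub, neg_neg]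
  rintro ⟨-, h | h⟩
  exacts [hne_neg_one h.symm, hne_one h.symm]

theorem cayley_psi_exists_walk_length_le_two (x y : DihedralGroup n) :
    ∃ p : (cayley (Psi n)).Walk x y, p.length ≤ 2 := by
  cases x with
  | r i =>
    cases y with
    | r j => exact ⟨.cons (cayley_psi_adj_r_sr i 0) (.cons (cayley_psi_adj_r_sr j 0).symm .nil),
        le_rfl⟩
    | sr j => exact ⟨.cons (cayley_psi_adj_r_sr i j) .nil, by simp⟩
  | sr i =>
    cases y with
    | r j => exact ⟨.cons (cayley_psi_adj_r_sr j i).symm .nil, by simp⟩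
    | sr j => exact ⟨.cons (cayley_psi_adj_r_sr 0 i).symm (.cons (cayley_psi_adj_r_sr 0 j) .nil),
        le_rfl⟩

theorem cayley_psi_connected : (cayley (Psi n)).Connected where
  preconnected x y := (cayley_psi_exists_walk_length_le_two x y).elim fun p _ => ⟨p⟩
  nonempty := ⟨1⟩

theorem cayley_psi_dist_le_two (x y : DihedralGroup n) : (cayley (Psi n)).dist x y ≤ 2 :=
  (cayley_psi_exists_walk_length_le_two x y).elim fun p hp => (dist_le p).trans hp

end CayleyPsi

theorem cayley_not_strong_resolving_general (n : ℕ) (hn : 4 ≤ n) :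
    ¬ IsStrongResolvingSet (cayley (Psi n))
      {x : DihedralGroup n | ∃ i : ℕ, 1 ≤ i ∧ i ≤ n / 2 ∧
        (x = (DihedralGroup.r 1) ^ i ∨ x = (DihedralGroup.r 1) ^ i * DihedralGroup.sr 0)} := by
  intro hR
  have hzero : ((0 : ℕ) : ZMod n) ≠ -1 := ZMod.natCast_ne_neg_one (by omega)
  rw [Nat.cast_zero] at hzero
  obtain ⟨w, ⟨i, hi, hin, hw⟩, hres⟩ := hR (r 0) (r (-1)) (mt r.inj hzero)
  have hi_ne_zero : (i : ZMod n) ≠ ((0 : ℕ) : ZMod n) :=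
    ZMod.natCast_ne_natCast_of_lt (by omega) (by omega) (by omega)
  rw [Nat.cast_zero] at hi_ne_zero
  have hi_ne_neg_one : (i : ZMod n) ≠ -1 := ZMod.natCast_ne_neg_one (by omega)
  refine not_stronglyResolves_of_dist_le_two cayley_psi_connected cayley_psi_dist_le_two
    (mt r.inj hzero) (cayley_psi_not_adj_r_zero_r_neg_one hn) ?_ ?_ hres <;>
  rcases hw with rfl | rfl <;>
  simp only [r_one_pow, r_mul_sr, ne_eq, r.injEq, reduceCtorEq, hi_ne_zero, hi_ne_neg_one,
    not_false_eq_true]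

theorem cayley_not_strong_resolving (n : ℕ) (hn : 4 ≤ n) (hev : Even n) :
    ¬ IsStrongResolvingSet (cayley (Psi n))
      {x : DihedralGroup n | ∃ i : ℕ, 1 ≤ i ∧ i ≤ n / 2 ∧
        (x = (DihedralGroup.r 1) ^ i ∨ x = (DihedralGroup.r 1) ^ i * DihedralGroup.sr 0)} :=
  cayley_not_strong_resolving_general n hn
end

section
/- Let n ≥ 4 be an even integer and Λ = Cay(D_{2n}, Ψ) with Ψ = {b, ab, ..., a^{n-1}b} ∪ {a^{n/2}}, and let N = {a^n, a^{n/2}, a^n b, a^{n/2} b}. Then S = V(Λ) \ N is not a strong resolving set of Λ: no vertex of S strongly resolves the adjacent pair a^n and a^{n/2}. -/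
/-!
The rotations `1 = a^n` and `a^{n/2}` are adjacent true twins of `Λ`: both are adjacent to every
reflection, and since `n/2 + n/2 = n`, each is the only rotation adjacent to the other. A vertex
`w` other than two adjacent true twins `u, v` satisfies `d(u, w) = d(v, w)` (the first edge of a
shortest path from one of them can be rerouted through the other), so neither twin lies on a
shortest path from the other to `w`.
-/

namespace SimpleGraph

variable {V : Type*} {G : SimpleGraph V} {u v w : V}

lemma dist_le_dist_of_adj_of_forall_adj (huv : G.Adj u v)
    (hv : ∀ x, x ≠ u → G.Adj v x → G.Adj u x) (hwv : w ≠ v) : G.dist u w ≤ G.dist v w := by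
  by_cases hvw : G.Reachable v w
  · obtain ⟨p, hp⟩ := hvw.exists_walk_length_eq_dist
    cases p with
    | nil => exact absurd rfl hwv
    | @cons _ x _ hvx q =>
      rw [← hp, Walk.length_cons]
      by_cases hxu : x = u
      · subst hxu
        exact (dist_le q).trans (Nat.le_succ _)
      · exact dist_le (Walk.cons (hv _ hxu hvx) q)
  · have huw : ¬ G.Reachable u w := fun h => hvw (huv.symm.reachable.trans h)
    rw [dist_eq_zero_of_not_reachable huw]
    exact Nat.zero_le _

lemma not_stronglyResolves_of_adj_of_forall_adj (huv : G.Adj u v)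
    (hu : ∀ x, x ≠ v → G.Adj u x → G.Adj v x) (hv : ∀ x, x ≠ u → G.Adj v x → G.Adj u x)
    (hwu : w ≠ u) (hwv : w ≠ v) : ¬ StronglyResolves G w u v := by
  have hle := dist_le_dist_of_adj_of_forall_adj huv hv hwv
  have hge := dist_le_dist_of_adj_of_forall_adj huv.symm hu hwu
  rw [StronglyResolves, dist_eq_one_iff_adj.mpr huv, dist_eq_one_iff_adj.mpr huv.symm]
  omega

end SimpleGraph

namespace DihedralGroup

open SimpleGraph

variable {n : ℕ}

lemma cayley_Psi_adj_r_sr (i j : ZMod n) : (cayley (Psi n)).Adj (r i) (sr j) := by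
  rw [cayley, fromRel_adj]
  exact ⟨by simp, Or.inl (Or.inl ⟨j + i, by rw [inv_r, r_mul_sr, sub_neg_eq_add]⟩)⟩

lemma eq_of_r_mem_Psi {k : ZMod n} (h : r k ∈ Psi n) : k = ((n / 2 : ℕ) : ZMod n) := by
  rcases h with ⟨i, hi⟩ | h
  · exact absurd hi (by simp)
  · exact r.inj h

lemma eq_add_half_of_cayley_Psi_adj_r_r {i j : ZMod n} (h : (cayley (Psi n)).Adj (r i) (r j)) :
    j = i + ((n / 2 : ℕ) : ZMod n) ∨ i = j + ((n / 2 : ℕ) : ZMod n) := by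
  rw [cayley, fromRel_adj] at h
  rcases h.2 with h | h <;> rw [inv_r, r_mul_r] at h <;> have := eq_of_r_mem_Psi h
  · exact Or.inl (by rw [← this]; ring)
  · exact Or.inr (by rw [← this]; ring)

lemma natCast_half_ne_zero (hn : 2 ≤ n) : ((n / 2 : ℕ) : ZMod n) ≠ 0 := by
  rw [Ne, ZMod.natCast_eq_zero_iff]
  exact Nat.not_dvd_of_pos_of_lt (by omega) (by omega)

lemma natCast_half_add_self (hev : Even n) :
    ((n / 2 : ℕ) : ZMod n) + ((n / 2 : ℕ) : ZMod n) = 0 := by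
  rw [← Nat.cast_add, ← two_mul, Nat.two_mul_div_two_of_even hev, ZMod.natCast_self]

lemma cayley_Psi_adj_r_r_add_half (hn : 2 ≤ n) (i : ZMod n) :
    (cayley (Psi n)).Adj (r i) (r (i + ((n / 2 : ℕ) : ZMod n))) := by
  rw [cayley, fromRel_adj]
  refine ⟨fun h => natCast_half_ne_zero hn ?_, Or.inl (Or.inr ?_)⟩
  · simpa using r.inj h
  · rw [inv_r, r_mul_r, neg_add_cancel_left]
    rfl

lemma cayley_Psi_adj_r_of_adj_r_add_half (hev : Even n) {i : ZMod n} {x : DihedralGroup n}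
    (hx : x ≠ r i) (h : (cayley (Psi n)).Adj (r (i + ((n / 2 : ℕ) : ZMod n))) x) :
    (cayley (Psi n)).Adj (r i) x := by
  cases x with
  | r k =>
    refine absurd ?_ hx
    rcases eq_add_half_of_cayley_Psi_adj_r_r h with h | h
    · rw [h, add_assoc, natCast_half_add_self hev, add_zero]
    · rw [add_right_cancel h]
  | sr k => exact cayley_Psi_adj_r_sr i k

end DihedralGroup

open DihedralGroup

theorem cayley_complement_clique_not_strong (n : ℕ) (hn : 4 ≤ n) (hev : Even n) :
    let a : DihedralGroup n := DihedralGroup.r 1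
    let b : DihedralGroup n := DihedralGroup.sr 0
    let N : Set (DihedralGroup n) := {a ^ n, a ^ (n / 2), a ^ n * b, a ^ (n / 2) * b}
    (cayley (Psi n)).Adj (a ^ n) (a ^ (n / 2)) ∧
    (∀ w ∈ Nᶜ, ¬ StronglyResolves (cayley (Psi n)) w (a ^ n) (a ^ (n / 2))) ∧
    ¬ IsStrongResolvingSet (cayley (Psi n)) Nᶜ := by
  intro a b N
  set m : ZMod n := ((n / 2 : ℕ) : ZMod n)
  have hu : a ^ n = r 0 := by rw [r_one_pow, ZMod.natCast_self]
  have hv : a ^ (n / 2) = r m := r_one_pow _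
  have hadj : (cayley (Psi n)).Adj (r 0) (r m) := by
    simpa using cayley_Psi_adj_r_r_add_half (n := n) (by omega) 0
  have hmm : m + m = 0 := natCast_half_add_self hev
  have hnot : ∀ w ∈ Nᶜ, ¬ StronglyResolves (cayley (Psi n)) w (r 0) (r m) := by
    intro w hw
    simp only [N, Set.mem_compl_iff, Set.mem_insert_iff, not_or, hu, hv] at hw
    refine SimpleGraph.not_stronglyResolves_of_adj_of_forall_adj hadj (fun x hx h => ?_)
      (fun x hx h => ?_) hw.1 hw.2.1
    · exact cayley_Psi_adj_r_of_adj_r_add_half hev (i := m) hx (by rwa [hmm])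
    · exact cayley_Psi_adj_r_of_adj_r_add_half hev hx (by rwa [zero_add])
  rw [hu, hv]
  exact ⟨hadj, hnot, fun h => by
    obtain ⟨w, hw, hres⟩ := h _ _ hadj.ne
    exact hnot w hw hres⟩
end

section
/- Let n ≥ 4 be an even integer and Λ = Cay(D_{2n}, Ψ) with Ψ = {b, ab, ..., a^{n-1}b} ∪ {a^{n/2}}. The strong metric dimension of Λ equals 2n − 2. -/
/-!
In `Cay(G, (G ∖ H) ∪ {c})` with `c⁻¹ = c`, vertices in different cosets of `H` are adjacent and
inside a coset the only edges are `x — x * c`. Hence the diameter is `2` and any two distinct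
vertices of one coset are mutually maximally distant, so only they themselves can strongly resolve
them: a strong resolving set misses at most one vertex per coset. Conversely the complement of a
transversal is strongly resolving, since representatives `u ≠ v` are resolved by `u * h` for any
`h ∈ H ∖ {1, c}`. For `D_{2n}`, `Ψ` is this connection set with `H = ⟨a⟩` and `c = a^{n/2}`.
-/

namespace SimpleGraph

variable {V : Type*} {G : SimpleGraph V} {u v w : V}

def IsMaximallyDistantFrom (G : SimpleGraph V) (v u : V) : Prop :=
  ∀ x, G.Adj v x → G.dist u x ≤ G.dist u v

theorem IsMaximallyDistantFrom.dist_ne_add (hG : G.Connected) (h : G.IsMaximallyDistantFrom v u)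
    (hw : w ≠ v) : G.dist u w ≠ G.dist u v + G.dist v w := by
  obtain ⟨p, hp⟩ := hG.exists_walk_length_eq_dist v w
  cases p with
  | nil => exact absurd rfl hw
  | @cons _ x _ hvx q =>
    intro heq
    have hx := h x hvx
    have htri : G.dist u w ≤ G.dist u x + G.dist x w := hG.dist_triangle
    have hq := dist_le q
    rw [Walk.length_cons] at hp
    omega

end SimpleGraph

open SimpleGraph

section StrongResolving

variable {V : Type*} {G : SimpleGraph V} {u v : V}

theorem StronglyResolves.self_left (G : SimpleGraph V) (u v : V) : StronglyResolves G u u v :=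
  Or.inr (by rw [dist_self, add_zero])

theorem StronglyResolves.self_right (G : SimpleGraph V) (u v : V) : StronglyResolves G v u v :=
  Or.inl (by rw [dist_self, add_zero])

theorem IsStrongResolvingSet.mem_or_mem {S : Set V} (hS : IsStrongResolvingSet G S)
    (hG : G.Connected) (huv : u ≠ v) (hu : G.IsMaximallyDistantFrom u v)
    (hv : G.IsMaximallyDistantFrom v u) : u ∈ S ∨ v ∈ S := by
  obtain ⟨w, hwS, hw⟩ := hS u v huv
  by_contra! h
  rcases hw with hw | hw
  · exact hv.dist_ne_add hG (ne_of_mem_of_not_mem hwS h.2) hw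
  · exact hu.dist_ne_add hG (ne_of_mem_of_not_mem hwS h.1) hw

theorem isStrongResolvingSet_compl {T : Set V}
    (h : ∀ u ∈ T, ∀ v ∈ T, u ≠ v → ∃ w ∉ T, StronglyResolves G w u v) :
    IsStrongResolvingSet G Tᶜ := by
  intro u v huv
  by_cases hu : u ∈ T
  · by_cases hv : v ∈ T
    · exact h u hu v hv huv
    · exact ⟨v, hv, .self_right G u v⟩
  · exact ⟨u, hu, .self_left G u v⟩

end StrongResolving

section CayleyComplSubgroup

variable {G : Type*} [Group G] {H : Subgroup G} {c x y : G}

variable (H c) in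
abbrev cayleyComplSubgroup : SimpleGraph G := cayley ((H : Set G)ᶜ ∪ {c})

namespace cayleyComplSubgroup

theorem adj_of_mk_ne (h : (x : G ⧸ H) ≠ y) : (cayleyComplSubgroup H c).Adj x y := by
  refine (fromRel_adj _ _ _).2 ⟨?_, Or.inl (Or.inl fun hxy => h (QuotientGroup.eq.2 hxy))⟩
  rintro rfl
  exact h rfl

theorem eq_mul_of_adj (hc : c⁻¹ = c) (hadj : (cayleyComplSubgroup H c).Adj x y)
    (h : (x : G ⧸ H) = y) : y = x * c := by
  obtain ⟨-, hxy | hyx⟩ := (fromRel_adj _ _ _).1 hadj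
  · rcases hxy with hxy | hxy
    · exact absurd (QuotientGroup.eq.1 h) hxy
    · rw [← Set.mem_singleton_iff.1 hxy, mul_inv_cancel_left]
  · rcases hyx with hyx | hyx
    · exact absurd (QuotientGroup.eq.1 h.symm) hyx
    · rw [← hc, ← Set.mem_singleton_iff.1 hyx, mul_inv_rev, inv_inv, mul_inv_cancel_left]

theorem exists_walk_length_le_two (hH : H ≠ ⊤) (x y : G) :
    ∃ p : (cayleyComplSubgroup H c).Walk x y, p.length ≤ 2 := by
  by_cases hxy : (x : G ⧸ H) = y
  · obtain ⟨g, hg⟩ : ∃ g, g ∉ H := by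
      by_contra! h
      exact hH (Subgroup.eq_top_iff' H |>.2 h)
    have hz : (x : G ⧸ H) ≠ (x * g : G) := fun h => hg (by simpa using QuotientGroup.eq.1 h)
    exact ⟨.cons (adj_of_mk_ne hz) (.cons (adj_of_mk_ne (hxy ▸ hz).symm) .nil),
      by simp⟩
  · exact ⟨(adj_of_mk_ne hxy).toWalk, by simp⟩

theorem connected (hH : H ≠ ⊤) : (cayleyComplSubgroup H c).Connected :=
  connected_iff_exists_forall_reachable _ |>.2
    ⟨1, fun y => (exists_walk_length_le_two hH 1 y).elim fun p _ => ⟨p⟩⟩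

theorem dist_le_two (hH : H ≠ ⊤) (x y : G) : (cayleyComplSubgroup H c).dist x y ≤ 2 :=
  (exists_walk_length_le_two hH x y).elim fun p hp => (dist_le p).trans hp

theorem isMaximallyDistantFrom_of_mk_eq (hH : H ≠ ⊤) (hc : c⁻¹ = c) (hxy : x ≠ y)
    (h : (x : G ⧸ H) = y) : (cayleyComplSubgroup H c).IsMaximallyDistantFrom y x := by
  have hconn := connected (c := c) hH
  intro z hyz
  by_cases hxz : (x : G ⧸ H) = z
  · have hz : z = y * c := eq_mul_of_adj hc hyz (h.symm.trans hxz)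
    by_cases hzx : z = x
    · rw [hzx, dist_self]
      exact Nat.zero_le _
    have hnadj : ¬(cayleyComplSubgroup H c).Adj x y := fun hadj => hzx <| by
      rw [hz, eq_mul_of_adj hc hadj h]
      nth_rw 2 [← hc]
      exact mul_inv_cancel_right x c
    have := hconn.one_lt_dist_of_ne_of_not_adj hxy hnadj
    have := dist_le_two (c := c) hH x z
    omega
  · rw [dist_eq_one_iff_adj.2 (adj_of_mk_ne hxz)]
    exact hconn.pos_dist_of_ne hxy

theorem ncard_compl_le_index [Finite G] (hH : H ≠ ⊤) (hc : c⁻¹ = c)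
    {S : Set G} (hS : IsStrongResolvingSet (cayleyComplSubgroup H c) S) :
    Sᶜ.ncard ≤ H.index := by
  rw [Subgroup.index, ← Set.ncard_univ]
  refine Set.ncard_le_ncard_of_injOn (QuotientGroup.mk : G → G ⧸ H)
    (fun _ _ => Set.mem_univ _) fun x hx y hy hxy => ?_
  by_contra hne
  rcases hS.mem_or_mem (connected hH) hne
    (isMaximallyDistantFrom_of_mk_eq hH hc (Ne.symm hne) hxy.symm)
    (isMaximallyDistantFrom_of_mk_eq hH hc hne hxy) with h | h
  · exact hx h
  · exact hy h

/-- Two coset representatives `u ≠ v` are strongly resolved by any `u * h` with `h ∈ H ∖ {1, c}`,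
which is at distance `2` from `u` and adjacent to `v`. -/
theorem isStrongResolvingSet_compl_range_out (hH : H ≠ ⊤) (hc : c⁻¹ = c)
    (hcard : 2 < Nat.card H) :
    IsStrongResolvingSet (cayleyComplSubgroup H c) (Set.range (Quotient.out : G ⧸ H → G))ᶜ := by
  obtain ⟨h, hhH, hh⟩ : ∃ h ∈ (H : Set G), h ∉ ({1, c} : Set G) := by
    refine Set.exists_mem_notMem_of_ncard_lt_ncard ?_ (Set.toFinite _)
    calc ({1, c} : Set G).ncard ≤ 2 := (Set.ncard_insert_le 1 {c}).trans (by simp)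
      _ < Nat.card H := hcard
      _ = (H : Set G).ncard := (Nat.card_coe_set_eq _)
  simp only [Set.mem_insert_iff, Set.mem_singleton_iff, not_or] at hh
  refine isStrongResolvingSet_compl ?_
  rintro _ ⟨p, rfl⟩ _ ⟨q, rfl⟩ hout
  have hpq : p ≠ q := fun h => hout (congrArg _ h)
  have hw : ((p.out * h : G) : G ⧸ H) = p :=
    (QuotientGroup.eq.2 (by simpa using hhH)).symm.trans p.out_eq'
  have hpw : p.out ≠ p.out * h := fun hpw => hh.1 (by simpa using hpw)
  refine ⟨p.out * h, ?_, Or.inl ?_⟩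
  · rintro ⟨r, hr⟩
    have : r = p := by rw [← hw, ← hr, QuotientGroup.out_eq']
    exact hpw (this ▸ hr)
  have hpq_adj := adj_of_mk_ne (H := H) (c := c)
    (by rwa [QuotientGroup.out_eq', QuotientGroup.out_eq'] : (p.out : G ⧸ H) ≠ q.out)
  have hqw_adj := adj_of_mk_ne (H := H) (c := c)
    (by rwa [QuotientGroup.out_eq', hw, ne_comm] : (q.out : G ⧸ H) ≠ (p.out * h : G))
  have hpw_nadj : ¬(cayleyComplSubgroup H c).Adj p.out (p.out * h) := fun hadj =>
    hh.2 (mul_left_cancel (eq_mul_of_adj hc hadj (by rw [hw, QuotientGroup.out_eq'])))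
  have := (connected hH).one_lt_dist_of_ne_of_not_adj hpw hpw_nadj
  have := dist_le_two (c := c) hH p.out (p.out * h)
  rw [dist_eq_one_iff_adj.2 hpq_adj, dist_eq_one_iff_adj.2 hqw_adj]
  omega

theorem isLeast_ncard_isStrongResolvingSet [Finite G] (hH : H ≠ ⊤)
    (hc : c⁻¹ = c) (hcard : 2 < Nat.card H) :
    IsLeast {m : ℕ | ∃ S : Set G, S.ncard = m ∧ IsStrongResolvingSet (cayleyComplSubgroup H c) S}
      (Nat.card G - H.index) := by
  refine ⟨⟨_, ?_, isStrongResolvingSet_compl_range_out hH hc hcard⟩, ?_⟩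
  · rw [Set.ncard_compl, Set.ncard_range_of_injective Quotient.out_injective]
    rfl
  · rintro _ ⟨S, rfl, hS⟩
    have := ncard_compl_le_index hH hc hS
    have := Set.ncard_add_ncard_compl S
    omega

end cayleyComplSubgroup

end CayleyComplSubgroup

namespace DihedralGroup

variable {n : ℕ}

def rotations (n : ℕ) : Subgroup (DihedralGroup n) := Subgroup.zpowers (r 1)

theorem mem_rotations {x : DihedralGroup n} : x ∈ rotations n ↔ ∃ i, x = r i := by
  simp only [rotations, Subgroup.mem_zpowers_iff, r_one_zpow]
  constructor
  · rintro ⟨k, rfl⟩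
    exact ⟨k, rfl⟩
  · rintro ⟨i, rfl⟩
    exact ⟨i.cast, by rw [ZMod.intCast_cast, ZMod.cast_id]⟩

theorem sr_notMem_rotations (i : ZMod n) : sr i ∉ rotations n := by
  simp [mem_rotations]

theorem nat_card_rotations : Nat.card (rotations n) = n := by
  rw [rotations, Nat.card_zpowers, orderOf_r_one]

theorem index_rotations [NeZero n] : (rotations n).index = 2 := by
  have h := (rotations n).index_mul_card
  rw [nat_card_rotations, nat_card] at h
  exact Nat.eq_of_mul_eq_mul_right (Nat.pos_of_neZero n) h

theorem psi_eq_compl_rotations_union :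
    Psi n = ((rotations n : Set (DihedralGroup n)))ᶜ ∪ {r ((n / 2 : ℕ) : ZMod n)} := by
  ext (i | i) <;> simp [Psi, mem_rotations]

theorem inv_r_half (hn : Even n) : (r ((n / 2 : ℕ) : ZMod n))⁻¹ = r ((n / 2 : ℕ) : ZMod n) := by
  obtain ⟨k, rfl⟩ := hn
  rw [show (k + k) / 2 = k by omega, inv_r]
  congr 1
  rw [neg_eq_iff_add_eq_zero, ← Nat.cast_add, ZMod.natCast_self]

end DihedralGroup

open DihedralGroup in
theorem cayley_strong_metric_dimension (n : ℕ) (hn : 4 ≤ n) (hev : Even n) :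
    IsLeast {m : ℕ | ∃ S : Set (DihedralGroup n),
      S.ncard = m ∧ IsStrongResolvingSet (cayley (Psi n)) S} (2 * n - 2) := by
  have : NeZero n := ⟨by omega⟩
  have h := cayleyComplSubgroup.isLeast_ncard_isStrongResolvingSet
    (fun h => sr_notMem_rotations 0 (h ▸ Subgroup.mem_top _)) (inv_r_half hev)
    (by rw [nat_card_rotations]; omega)
  rwa [nat_card, index_rotations, cayleyComplSubgroup, ← psi_eq_compl_rotations_union] at h
end
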